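/- On ℝ⁴ with Darboux coordinates (q¹, q², p₁, p₂) and canonical symplectic structure, the two constraint functions φ₁ = p₂ + A e^{(2/3)q¹}(q²)^{-5/3} and φ₂ = p₁ − A e^{(2/3)q¹}(q²)^{-2/3} (for a constant A > 0, on the region q² > 0) have vanishing Poisson bracket: {φ₁, φ₂} = 0 identically. -/

import Mathlib

/-!
The momenta enter linearly, with `∂φ₁/∂p₂ = ∂φ₂/∂p₁ = 1` and `∂φ₁/∂p₁ = ∂φ₂/∂p₂ = 0`, so the
bracket reduces to `∂φ₁/∂q¹ − ∂φ₂/∂q²`. Both terms equal `(2/3) A e^{(2/3)q¹} (q²)^{-5/3}`: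
differentiating the exponential brings down `2/3`, and differentiating `(q²)^{-2/3}` brings
down `-2/3` and lowers the exponent to `-5/3`.
-/

/-- Ideal-gas constraint `φ₁ = p₂ + A e^{(2/3)q¹}(q²)^{-5/3}`. -/
noncomputable def phi1 (A q1 q2 p1 p2 : ℝ) : ℝ :=
  p2 + A * Real.exp (2 / 3 * q1) * q2 ^ ((-5 : ℝ) / 3)

/-- Ideal-gas constraint `φ₂ = p₁ − A e^{(2/3)q¹}(q²)^{-2/3}`. -/
noncomputable def phi2 (A q1 q2 p1 p2 : ℝ) : ℝ :=
  p1 - A * Real.exp (2 / 3 * q1) * q2 ^ ((-2 : ℝ) / 3)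

open Real

lemma hasDerivAt_const_mul_exp_const_mul_mul (a c b x : ℝ) :
    HasDerivAt (fun y => a * exp (c * y) * b) (c * (a * exp (c * x) * b)) x := by
  refine ((((hasDerivAt_id' x).const_mul c).exp.const_mul a).mul_const b).congr_deriv ?_
  ring

section Partials

variable (A q1 q2 p1 p2 : ℝ)

lemma deriv_phi1_q1 :
    deriv (fun x => phi1 A x q2 p1 p2) q1 =
      2 / 3 * (A * exp (2 / 3 * q1) * q2 ^ ((-5 : ℝ) / 3)) :=
  ((hasDerivAt_const_mul_exp_const_mul_mul _ _ _ q1).const_add p2).deriv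

lemma deriv_phi2_q2 (hq2 : q2 ≠ 0) :
    deriv (fun x => phi2 A q1 x p1 p2) q2 =
      2 / 3 * (A * exp (2 / 3 * q1) * q2 ^ ((-5 : ℝ) / 3)) := by
  have h := ((Real.hasDerivAt_rpow_const (p := (-2 : ℝ) / 3) (Or.inl hq2)).const_mul
    (A * exp (2 / 3 * q1))).const_sub p1
  unfold phi2
  rw [h.deriv, show (-2 : ℝ) / 3 - 1 = -5 / 3 by norm_num]
  ring

lemma deriv_phi1_p1 : deriv (fun y => phi1 A q1 q2 y p2) p1 = 0 := by
  simp [phi1]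

lemma deriv_phi2_p1 : deriv (fun y => phi2 A q1 q2 y p2) p1 = 1 :=
  ((hasDerivAt_id p1).sub_const _).deriv

lemma deriv_phi1_p2 : deriv (fun y => phi1 A q1 q2 p1 y) p2 = 1 :=
  ((hasDerivAt_id p2).add_const _).deriv

lemma deriv_phi2_p2 : deriv (fun y => phi2 A q1 q2 p1 y) p2 = 0 := by
  simp [phi2]

end Partials

theorem stmt3_general (A : ℝ) (q1 q2 p1 p2 : ℝ) (hq2 : 0 < q2) :
    (deriv (fun x => phi1 A x q2 p1 p2) q1) * (deriv (fun y => phi2 A q1 q2 y p2) p1)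
  - (deriv (fun x => phi2 A x q2 p1 p2) q1) * (deriv (fun y => phi1 A q1 q2 y p2) p1)
  + (deriv (fun x => phi1 A q1 x p1 p2) q2) * (deriv (fun y => phi2 A q1 q2 p1 y) p2)
  - (deriv (fun x => phi2 A q1 x p1 p2) q2) * (deriv (fun y => phi1 A q1 q2 p1 y) p2)
    = 0 := by
  rw [deriv_phi1_q1, deriv_phi2_p1, deriv_phi1_p1, deriv_phi2_p2,
    deriv_phi2_q2 A q1 q2 p1 p2 hq2.ne', deriv_phi1_p2]
  ring

/-- The canonical Poisson bracket `{φ₁, φ₂}` vanishes identically on the region `q² > 0`. -/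
theorem stmt3 (A : ℝ) (hA : 0 < A) (q1 q2 p1 p2 : ℝ) (hq2 : 0 < q2) :
    (deriv (fun x => phi1 A x q2 p1 p2) q1) * (deriv (fun y => phi2 A q1 q2 y p2) p1)
  - (deriv (fun x => phi2 A x q2 p1 p2) q1) * (deriv (fun y => phi1 A q1 q2 y p2) p1)
  + (deriv (fun x => phi1 A q1 x p1 p2) q2) * (deriv (fun y => phi2 A q1 q2 p1 y) p2)
  - (deriv (fun x => phi2 A q1 x p1 p2) q2) * (deriv (fun y => phi1 A q1 q2 p1 y) p2)
    = 0 :=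
  stmt3_general A q1 q2 p1 p2 hq2
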